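/- Let Δ > 0 and 0 < p_max < 1. Let δ be a random variable with 0 ≤ δ ≤ Δ almost surely and E[δ] > 0, and let B be an event with p := Pr[B] satisfying 0 < p ≤ p_max. Define δ' := δ + α·1_B. If α > 2Δ/(1 − p_max), then Var(δ') / (E[δ'])² ≥ α·p·( α·(1 − p_max) − 2Δ ) / (Δ + α·p)² > 0. -/

import Mathlib

/-!
Write `p = Pr[B]` and `δ' = δ + α·1_B`. Expanding the variance,
`Var δ' = Var δ + 2α·Cov(δ, 1_B) + α²·p(1 - p)`, and `Cov(δ, 1_B) = E[δ·1_B] - E[δ]·p ≥ -Δp`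
because `0 ≤ δ ≤ Δ`. Hence `Var δ' ≥ αp(α(1 - p_max) - 2Δ)`, which is positive exactly when
`α > 2Δ/(1 - p_max)`, while `0 < E[δ'] = E[δ] + αp ≤ Δ + αp`.
-/

open MeasureTheory ProbabilityTheory

namespace ProbabilityTheory

variable {Ω : Type*} [MeasurableSpace Ω] {μ : Measure Ω} {X : Ω → ℝ} {B : Set Ω}

lemma memLp_indicator_one [IsFiniteMeasure μ] (hB : MeasurableSet B) :
    MemLp (B.indicator fun _ ↦ (1 : ℝ)) 2 μ :=
  memLp_indicator_const 2 hB 1 (.inr (measure_ne_top μ B))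

lemma integral_indicator_fun_one (hB : MeasurableSet B) :
    ∫ ω, B.indicator (fun _ ↦ (1 : ℝ)) ω ∂μ = μ.real B :=
  integral_indicator_one hB

lemma integral_add_const_mul_indicator_one [IsFiniteMeasure μ] (hX : Integrable X μ)
    (hB : MeasurableSet B) (α : ℝ) :
    ∫ ω, X ω + α * B.indicator (fun _ ↦ (1 : ℝ)) ω ∂μ = μ[X] + α * μ.real B := by
  rw [integral_add hX ((memLp_indicator_one hB).integrable one_le_two |>.const_mul α),
    integral_const_mul, integral_indicator_fun_one hB]

variable [IsProbabilityMeasure μ]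

lemma variance_indicator_one (hB : MeasurableSet B) :
    Var[B.indicator (fun _ ↦ (1 : ℝ)); μ] = μ.real B * (1 - μ.real B) := by
  have hsq : (B.indicator fun _ ↦ (1 : ℝ)) ^ 2 = B.indicator fun _ ↦ 1 := by
    ext ω; by_cases h : ω ∈ B <;> simp [h]
  rw [variance_eq_sub (memLp_indicator_one hB), hsq, integral_indicator_fun_one hB]
  ring

lemma covariance_indicator_one (hX : MemLp X 2 μ) (hB : MeasurableSet B) :
    cov[X, B.indicator (fun _ ↦ (1 : ℝ)); μ] = ∫ ω in B, X ω ∂μ - μ[X] * μ.real B := by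
  have hmul : X * B.indicator (fun _ ↦ 1) = B.indicator X := by
    ext ω; by_cases h : ω ∈ B <;> simp [h]
  rw [covariance_eq_sub hX (memLp_indicator_one hB), hmul, integral_indicator hB,
    integral_indicator_fun_one hB]

lemma memLp_two_of_ae_mem_Icc {Δ : ℝ} (hX : AEStronglyMeasurable X μ)
    (hbd : ∀ᵐ ω ∂μ, X ω ∈ Set.Icc 0 Δ) : MemLp X 2 μ :=
  MemLp.of_bound hX Δ <| hbd.mono fun _ h ↦ by
    rw [Real.norm_eq_abs, abs_le]
    constructor <;> linarith [h.1, h.2]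

lemma integral_le_of_ae_mem_Icc {Δ : ℝ} (hbd : ∀ᵐ ω ∂μ, X ω ∈ Set.Icc 0 Δ) : μ[X] ≤ Δ := by
  simpa using integral_mono_of_nonneg (hbd.mono fun _ h ↦ h.1) (integrable_const Δ)
    (hbd.mono fun _ h ↦ h.2)

lemma neg_mul_measureReal_le_covariance_indicator_one {Δ : ℝ} (hX : AEStronglyMeasurable X μ)
    (hbd : ∀ᵐ ω ∂μ, X ω ∈ Set.Icc 0 Δ) (hB : MeasurableSet B) :
    -(Δ * μ.real B) ≤ cov[X, B.indicator (fun _ ↦ (1 : ℝ)); μ] := by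
  have hB_int : 0 ≤ ∫ ω in B, X ω ∂μ := setIntegral_nonneg_of_ae (hbd.mono fun _ h ↦ h.1)
  rw [covariance_indicator_one (memLp_two_of_ae_mem_Icc hX hbd) hB]
  nlinarith [integral_le_of_ae_mem_Icc hbd, measureReal_nonneg (μ := μ) (s := B)]

lemma le_variance_add_const_mul_indicator_one {Δ α : ℝ} (hα : 0 ≤ α)
    (hX : AEStronglyMeasurable X μ) (hbd : ∀ᵐ ω ∂μ, X ω ∈ Set.Icc 0 Δ) (hB : MeasurableSet B) :
    α * μ.real B * (α * (1 - μ.real B) - 2 * Δ) ≤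
      Var[fun ω ↦ X ω + α * B.indicator (fun _ ↦ (1 : ℝ)) ω; μ] := by
  have hcov := mul_le_mul_of_nonneg_left
    (neg_mul_measureReal_le_covariance_indicator_one hX hbd hB) hα
  rw [variance_fun_add (memLp_two_of_ae_mem_Icc hX hbd) ((memLp_indicator_one hB).const_mul α),
    covariance_const_mul_right, variance_const_mul, variance_indicator_one hB]
  nlinarith [variance_nonneg X μ]

end ProbabilityTheory

theorem stmt_6_general {Ω : Type} [MeasureSpace Ω] [IsProbabilityMeasure (ℙ : Measure Ω)]
    {Δ pmax α : ℝ} (hΔ : 0 < Δ) (hpmax1 : pmax < 1)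
    (δ : Ω → ℝ) (hmeas : Measurable δ)
    (hbd : ∀ᵐ ω, 0 ≤ δ ω ∧ δ ω ≤ Δ)
    (B : Set Ω) (hB : MeasurableSet B)
    (hp0 : 0 < (ℙ B).toReal) (hp : (ℙ B).toReal ≤ pmax)
    (hα : α > 2 * Δ / (1 - pmax)) :
    variance (fun ω => δ ω + α * B.indicator (fun _ => (1 : ℝ)) ω) ℙ
        / (∫ ω, (δ ω + α * B.indicator (fun _ => (1 : ℝ)) ω)) ^ 2
      ≥ α * (ℙ B).toReal * (α * (1 - pmax) - 2 * Δ) / (Δ + α * (ℙ B).toReal) ^ 2 ∧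
    (0 : ℝ) < α * (ℙ B).toReal * (α * (1 - pmax) - 2 * Δ) / (Δ + α * (ℙ B).toReal) ^ 2 := by
  simp only [← measureReal_def] at *
  set p := (ℙ : Measure Ω).real B
  have h1p : 0 < 1 - pmax := by linarith
  have hgap : 2 * Δ < α * (1 - pmax) := (div_lt_iff₀ h1p).mp hα
  have hα0 : 0 < α := pos_of_mul_pos_left (by linarith) h1p.le
  have hbound_pos : 0 < α * p * (α * (1 - pmax) - 2 * Δ) :=
    mul_pos (mul_pos hα0 hp0) (by linarith)
  have hvar : α * p * (α * (1 - pmax) - 2 * Δ) ≤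
      Var[fun ω ↦ δ ω + α * B.indicator (fun _ ↦ (1 : ℝ)) ω; (ℙ : Measure Ω)] :=
    (le_variance_add_const_mul_indicator_one hα0.le hmeas.aestronglyMeasurable hbd hB).trans'
      (by gcongr)
  have hE := integral_add_const_mul_indicator_one
    ((memLp_two_of_ae_mem_Icc hmeas.aestronglyMeasurable hbd).integrable one_le_two) hB α
  have hEδ_nonneg : 0 ≤ ∫ ω, δ ω := integral_nonneg_of_ae (hbd.mono fun _ h ↦ h.1)
  have hEδ_le : ∫ ω, δ ω ≤ Δ := integral_le_of_ae_mem_Icc hbd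
  have hE_pos : 0 < ∫ ω, δ ω + α * B.indicator (fun _ ↦ (1 : ℝ)) ω := by
    rw [hE]; positivity
  have hE_le : ∫ ω, δ ω + α * B.indicator (fun _ ↦ (1 : ℝ)) ω ≤ Δ + α * p := by
    rw [hE]; linarith
  exact ⟨div_le_div₀ (hbound_pos.le.trans hvar) hvar (by positivity)
      (pow_le_pow_left₀ hE_pos.le hE_le 2), div_pos hbound_pos (by positivity)⟩

/-- paper Theorem 6.3, stability of filtered search, at a fixed dimension:
for a distance `δ` with `0 ≤ δ ≤ Δ` a.s. and `E[δ] > 0`, and a filter-mismatch event `B`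
with `0 < p = Pr[B] ≤ p_max < 1`, if the penalty satisfies `α > 2Δ/(1 - p_max)` then the
relative variance of the penalized distance `δ' = δ + α·1_B` satisfies
`RelVar(δ') ≥ α·p·(α·(1 - p_max) - 2Δ)/(Δ + α·p)² > 0`. -/
theorem stmt_6 {Ω : Type} [MeasureSpace Ω] [IsProbabilityMeasure (ℙ : Measure Ω)]
    {Δ pmax α : ℝ} (hΔ : 0 < Δ) (hpmax0 : 0 < pmax) (hpmax1 : pmax < 1)
    (δ : Ω → ℝ) (hmeas : Measurable δ)
    (hbd : ∀ᵐ ω, 0 ≤ δ ω ∧ δ ω ≤ Δ)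
    (hEpos : 0 < ∫ ω, δ ω)
    (B : Set Ω) (hB : MeasurableSet B)
    (hp0 : 0 < (ℙ B).toReal) (hp : (ℙ B).toReal ≤ pmax)
    (hα : α > 2 * Δ / (1 - pmax)) :
    variance (fun ω => δ ω + α * B.indicator (fun _ => (1 : ℝ)) ω) ℙ
        / (∫ ω, (δ ω + α * B.indicator (fun _ => (1 : ℝ)) ω)) ^ 2
      ≥ α * (ℙ B).toReal * (α * (1 - pmax) - 2 * Δ) / (Δ + α * (ℙ B).toReal) ^ 2 ∧
    (0 : ℝ) < α * (ℙ B).toReal * (α * (1 - pmax) - 2 * Δ) / (Δ + α * (ℙ B).toReal) ^ 2 :=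
  stmt_6_general hΔ hpmax1 δ hmeas hbd B hB hp0 hp hα
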